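/- arXiv:1608.05696 — 2 statements merged into one kernel-verified Lean document; each statement's English description precedes it below -/
import Mathlib

section
/- For all integers a ≥ 1, the sum of absolute values of the nonzero centered finite difference coefficients satisfies ∑_{j=-a, j≠0}^{a} |d_{2a+1,j}| < 2π²/3, where d_{2a+1,j} = 2(-1)^{a+j+1}(a!)²/((a+j)!(a-j)!j²). -/
open Real Finset

noncomputable def dcoef (a j : ℤ) : ℝ :=
  2 * (-1 : ℝ) ^ (a + j + 1) * ((Nat.factorial a.toNat : ℝ))^2 /
    ((Nat.factorial (a + j).toNat : ℝ) * (Nat.factorial (a - j).toNat : ℝ) * (j : ℝ)^2)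

lemma fact_sq_le (a k : ℕ) (hk : k ≤ a) :
    a.factorial * a.factorial ≤ (a + k).factorial * (a - k).factorial := by
  induction k with
  | zero => simp
  | succ k ih =>
    have hk' : k ≤ a := le_of_lt hk
    calc a.factorial * a.factorial ≤ (a + k).factorial * (a - k).factorial := ih hk'
      _ ≤ (a + (k+1)).factorial * (a - (k+1)).factorial := by
          have h1 : a - k = (a - (k+1)) + 1 := by omega
          have h2 : a + (k+1) = (a + k) + 1 := by omega
          rw [h1, h2, Nat.factorial_succ, Nat.factorial_succ]
          have : (a - (k+1)) + 1 ≤ (a + k) + 1 := by omega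
          calc (a + k).factorial * ((a - (k+1) + 1) * (a - (k+1)).factorial)
              ≤ (a + k).factorial * ((a + k + 1) * (a - (k+1)).factorial) := by
                apply Nat.mul_le_mul_left
                exact Nat.mul_le_mul_right _ (by omega)
            _ = (a + k + 1) * (a + k).factorial * (a - (k+1)).factorial := by ring

lemma abs_dcoef_le (a j : ℤ) (hj : j ≠ 0) (hja : -a ≤ j) (haj : j ≤ a) :
    |dcoef a j| ≤ 2 / (j : ℝ)^2 := by
  have ha0 : 0 ≤ a := by omega
  -- |(-1)^(a+j+1)| = 1
  have hsign : |(-1 : ℝ) ^ (a + j + 1)| = 1 := by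
    rcases Int.even_or_odd (a + j + 1) with h | h
    · rw [h.neg_one_zpow]; norm_num
    · rw [h.neg_one_zpow]; norm_num
  have hjR : ((j : ℝ))^2 > 0 := by positivity
  have hfac : ((a.toNat.factorial : ℝ))^2 ≤
      ((a + j).toNat.factorial : ℝ) * ((a - j).toNat.factorial : ℝ) := by
    rcases le_or_gt 0 j with hj0 | hj0
    · have hkey := fact_sq_le a.toNat j.toNat (by omega)
      have e1 : (a + j).toNat = a.toNat + j.toNat := by omega
      have e2 : (a - j).toNat = a.toNat - j.toNat := by omega
      rw [e1, e2]
      have h := (Nat.cast_le (α := ℝ)).mpr hkey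
      push_cast at h
      nlinarith [h]
    · have hkey := fact_sq_le a.toNat (-j).toNat (by omega)
      have e1 : (a + j).toNat = a.toNat - (-j).toNat := by omega
      have e2 : (a - j).toNat = a.toNat + (-j).toNat := by omega
      rw [e1, e2]
      have h := (Nat.cast_le (α := ℝ)).mpr hkey
      push_cast at h
      nlinarith [h]
  have hden : (0 : ℝ) < ((a + j).toNat.factorial : ℝ) * ((a - j).toNat.factorial : ℝ) := by
    positivity
  unfold dcoef
  rw [abs_div, abs_mul, abs_mul, hsign, mul_one]
  have h2 : |(2 : ℝ)| = 2 := by norm_num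
  rw [h2, abs_of_nonneg (by positivity : (0:ℝ) ≤ ((a.toNat.factorial : ℝ))^2)]
  rw [abs_of_pos (by positivity : (0:ℝ) < ((a + j).toNat.factorial : ℝ) * ((a - j).toNat.factorial : ℝ) * (j:ℝ)^2)]
  rw [div_le_div_iff₀ (by positivity) (by positivity)]
  calc 2 * ((a.toNat.factorial : ℝ))^2 * (j:ℝ)^2
      ≤ 2 * (((a + j).toNat.factorial : ℝ) * ((a - j).toNat.factorial : ℝ)) * (j:ℝ)^2 := by
        nlinarith [hfac, hjR]
    _ = 2 * (((a + j).toNat.factorial : ℝ) * ((a - j).toNat.factorial : ℝ) * (j:ℝ)^2) := by ring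

theorem dcoef_abs_sum_lt (a : ℤ) (ha : 1 ≤ a) :
    ∑ j ∈ (Finset.Icc (-a) a).erase 0, |dcoef a j| < 2 * π ^ 2 / 3 := by
  have hstep1 : ∑ j ∈ (Finset.Icc (-a) a).erase 0, |dcoef a j|
      ≤ ∑ j ∈ (Finset.Icc (-a) a).erase 0, 2 / (j : ℝ)^2 := by
    apply Finset.sum_le_sum
    intro j hj
    simp only [Finset.mem_erase, Finset.mem_Icc] at hj
    exact abs_dcoef_le a j hj.1 hj.2.1 hj.2.2
  -- split the erased interval
  have hsplit : (Finset.Icc (-a) a).erase 0 = Finset.Icc (-a) (-1) ∪ Finset.Icc 1 a := by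
    ext j
    simp only [Finset.mem_erase, Finset.mem_Icc, Finset.mem_union]
    omega
  have hdisj : Disjoint (Finset.Icc (-a) (-1)) (Finset.Icc 1 a) := by
    rw [Finset.disjoint_left]
    intro j hj hj'
    simp only [Finset.mem_Icc] at hj hj'
    omega
  have hneg : ∑ j ∈ Finset.Icc (-a) (-1), 2 / (j : ℝ)^2
      = ∑ j ∈ Finset.Icc 1 a, 2 / (j : ℝ)^2 := by
    apply Finset.sum_nbij' (fun j => -j) (fun j => -j)
    · intro j hj; simp only [Finset.mem_Icc] at hj ⊢; omega
    · intro j hj; simp only [Finset.mem_Icc] at hj ⊢; omega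
    · intro j _; ring
    · intro j _; ring
    · intro j _; push_cast; ring_nf
  have hnat : ∑ j ∈ Finset.Icc (1:ℤ) a, 2 / (j : ℝ)^2
      = ∑ n ∈ Finset.Icc 1 a.toNat, 2 / (n : ℝ)^2 := by
    refine Finset.sum_nbij' (fun j => j.toNat) (fun n => (n : ℤ)) ?_ ?_ ?_ ?_ ?_
    · intro j hj; simp only [Finset.mem_Icc] at hj ⊢; omega
    · intro n hn; simp only [Finset.mem_Icc] at hn ⊢; omega
    · intro j hj
      simp only [Finset.mem_Icc] at hj
      show ((j.toNat : ℤ)) = j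
      omega
    · intro n _
      show ((n : ℤ)).toNat = n
      simp
    · intro j hj
      simp only [Finset.mem_Icc] at hj
      show (2 : ℝ) / (j : ℝ)^2 = 2 / ((j.toNat : ℕ) : ℝ)^2
      have hjj : ((j.toNat : ℤ)) = j := Int.toNat_of_nonneg (by omega)
      congr 1
      conv_lhs => rw [← hjj]
      push_cast
      ring
  have hbasel : HasSum (fun n : ℕ => (1 : ℝ) / (n : ℝ) ^ 2) (π ^ 2 / 6) := hasSum_zeta_two
  have hsummable : Summable (fun n : ℕ => (1 : ℝ) / (n : ℝ) ^ 2) := hbasel.summable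
  have hpartial : ∑ n ∈ Finset.Icc 1 a.toNat, (1 : ℝ) / (n : ℝ)^2 < π ^ 2 / 6 := by
    have hle : ∑ n ∈ insert (a.toNat + 1) (Finset.Icc 1 a.toNat), (1 : ℝ) / (n : ℝ)^2
        ≤ π ^ 2 / 6 := by
      rw [← hbasel.tsum_eq]
      exact Summable.sum_le_tsum _ (fun n _ => by positivity) hsummable
    have hnotmem : (a.toNat + 1) ∉ Finset.Icc 1 a.toNat := by
      simp
    rw [Finset.sum_insert hnotmem] at hle
    have : (0:ℝ) < 1 / ((a.toNat + 1 : ℕ) : ℝ)^2 := by positivity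
    linarith
  calc ∑ j ∈ (Finset.Icc (-a) a).erase 0, |dcoef a j|
      ≤ ∑ j ∈ (Finset.Icc (-a) a).erase 0, 2 / (j : ℝ)^2 := hstep1
    _ = ∑ j ∈ Finset.Icc (-a) (-1), 2 / (j : ℝ)^2 + ∑ j ∈ Finset.Icc 1 a, 2 / (j : ℝ)^2 := by
        rw [hsplit, Finset.sum_union hdisj]
    _ = 2 * ∑ j ∈ Finset.Icc 1 a, 2 / (j : ℝ)^2 := by rw [hneg]; ring
    _ = 4 * ∑ n ∈ Finset.Icc 1 a.toNat, (1 : ℝ) / (n : ℝ)^2 := by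
        rw [hnat, Finset.mul_sum, Finset.mul_sum]
        apply Finset.sum_congr rfl
        intro n _; ring
    _ < 4 * (π ^ 2 / 6) := by linarith
    _ = 2 * π ^ 2 / 3 := by ring
end

section
/- For all integers a ≥ 1, a^{2a+1}/(2a+1)! ≤ √a · e^{2a(1-ln 2)} / (2(2a+1)√π), and consequently a^{2a+1}/(2a+1)! ≤ e^{2a(1-ln 2)}/(6√π). -/
open Real

theorem stirling_bound (a : ℕ) (ha : 1 ≤ a) :
    (a : ℝ) ^ (2 * a + 1) / (Nat.factorial (2 * a + 1) : ℝ) ≤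
      Real.sqrt a * Real.exp (2 * a * (1 - Real.log 2)) / (2 * (2 * a + 1) * Real.sqrt π) ∧
    (a : ℝ) ^ (2 * a + 1) / (Nat.factorial (2 * a + 1) : ℝ) ≤
      Real.exp (2 * a * (1 - Real.log 2)) / (6 * Real.sqrt π) := by
  have ha0 : (0:ℝ) < a := by exact_mod_cast ha
  -- Stirling lower bound for (2a)!
  have hpi : √π ≤ Stirling.stirlingSeq (2 * a) := by
    obtain ⟨m, hm⟩ : ∃ m, 2 * a = m + 1 := ⟨2 * a - 1, by omega⟩
    rw [hm]
    exact Stirling.stirlingSeq'_antitone.le_of_tendsto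
      (Stirling.tendsto_stirlingSeq_sqrt_pi.comp (Filter.tendsto_add_atTop_nat 1)) m
  have hden : (0:ℝ) < √(2 * (2 * a : ℕ)) * (((2 * a : ℕ) : ℝ) / exp 1) ^ (2 * a) := by
    have : (0:ℝ) < ((2 * a : ℕ) : ℝ) := by positivity
    positivity
  have hfac : √π * (√(2 * (2 * a : ℕ)) * (((2 * a : ℕ) : ℝ) / exp 1) ^ (2 * a))
      ≤ ((2 * a).factorial : ℝ) := by
    rw [← le_div_iff₀ hden]
    exact hpi
  -- sqrt and exp simplifications
  have hs : (0:ℝ) < √a := Real.sqrt_pos.mpr ha0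
  have hsq : √(a:ℝ) * √(a:ℝ) = a := Real.mul_self_sqrt ha0.le
  have h4 : √(2 * (2 * a : ℕ) : ℝ) = 2 * √a := by
    push_cast
    rw [show (2 * (2 * (a:ℝ))) = 4 * a by ring, show (4:ℝ) * a = 2^2 * a by norm_num,
      Real.sqrt_mul (by positivity), Real.sqrt_sq (by norm_num)]
  have hE : Real.exp (2 * a * (1 - Real.log 2)) = Real.exp 1 ^ (2 * a) / 2 ^ (2 * a) := by
    rw [mul_sub, mul_one, Real.exp_sub]
    congr 1
    · rw [show (2 * (a:ℝ)) = ((2 * a : ℕ) : ℝ) * 1 by push_cast; ring, Real.exp_nat_mul]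
    · rw [show (2 * (a:ℝ) * Real.log 2) = ((2 * a : ℕ) : ℝ) * Real.log 2 by push_cast; ring,
        Real.exp_nat_mul, Real.exp_log (by norm_num)]
  have he1 : (0:ℝ) < Real.exp 1 := Real.exp_pos 1
  have hp : (0:ℝ) < √π := Real.sqrt_pos.mpr Real.pi_pos
  -- Key bound
  have key : (a : ℝ) ^ (2 * a + 1) / (Nat.factorial (2 * a + 1) : ℝ) ≤
      √a * Real.exp (2 * a * (1 - Real.log 2)) / (2 * (2 * a + 1) * √π) := by
    have hfs : ((2 * a + 1).factorial : ℝ) = (2 * a + 1 : ℕ) * ((2 * a).factorial : ℝ) := by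
      rw [Nat.factorial_succ]; push_cast; ring
    have h1 : (a : ℝ) ^ (2 * a + 1) / (Nat.factorial (2 * a + 1) : ℝ) ≤
        (a : ℝ) ^ (2 * a + 1) /
          (((2 * a + 1 : ℕ) : ℝ) *
            (√π * (√(2 * (2 * a : ℕ)) * (((2 * a : ℕ) : ℝ) / exp 1) ^ (2 * a)))) := by
      apply div_le_div_of_nonneg_left (by positivity) (by positivity)
      rw [hfs]
      have : (0:ℝ) < ((2 * a + 1 : ℕ) : ℝ) := by positivity
      exact mul_le_mul_of_nonneg_left hfac this.le
    refine h1.trans_eq ?_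
    rw [hE, h4]
    have hcast : (((2 * a : ℕ)) : ℝ) = 2 * (a:ℝ) := by push_cast; ring
    have hcast2 : (((2 * a + 1 : ℕ)) : ℝ) = 2 * (a:ℝ) + 1 := by push_cast; ring
    rw [hcast, hcast2, div_pow, mul_pow]
    have haa : (a:ℝ) ^ (2 * a + 1) = (a:ℝ) ^ (2 * a) * √a * √a := by
      rw [pow_succ, mul_assoc, hsq]
    rw [haa]
    field_simp
  refine ⟨key, key.trans ?_⟩
  -- second: √a/(2(2a+1)) ≤ 1/6, i.e. 3√a ≤ 2a+1
  have hs1 : 1 ≤ √(a:ℝ) := by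
    rw [show (1:ℝ) = √1 by simp]
    exact Real.sqrt_le_sqrt (by exact_mod_cast ha)
  have h3 : 3 * √(a:ℝ) ≤ 2 * a + 1 := by
    nlinarith [hsq, mul_nonneg (by linarith : (0:ℝ) ≤ 2 * √(a:ℝ) - 1)
      (by linarith : (0:ℝ) ≤ √(a:ℝ) - 1)]
  rw [div_le_div_iff₀ (by positivity) (by positivity)]
  have hEpos : (0:ℝ) < Real.exp (2 * a * (1 - Real.log 2)) := Real.exp_pos _
  nlinarith [mul_pos hEpos hp, mul_nonneg (mul_nonneg hEpos.le hp.le) (sub_nonneg.mpr h3), hs]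
end
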